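/- Let g ≥ 2 and r ≥ 1 be integers. In the field ℚ(q, t) of rational functions in two variables over ℚ, set Ω_r = ∏_{k=2}^{r} (1 + q^k t^{k−1})^{2g} / ((1 − q^k t^{k−2})(1 − q^k t^k)) (the empty product for r = 1 being 1). Let ι be the ℚ-algebra automorphism of ℚ(q, t) determined by ι(q) = q⁻¹ and ι(t) = t⁻¹. Then q^{(r+2)(r−1)(g−1)} · t^{r(r−1)(g−1)} · ι(Ω_r) = Ω_r. -/

import Mathlib

/-!
Statement 5: the symmetry of the refined Poincaré series `Ω(𝔑_{r,d}, q, t)` of the full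
fixed-determinant moduli stack (Section 1.3 of the paper), stated as a rational-function
identity in the field `ℚ(q, t) = FractionRing (MvPolynomial (Fin 2) ℚ)`, with `q = X 0`,
`t = X 1`.
-/

noncomputable section

/-- The field `ℚ(q, t)` of rational functions in two variables. -/
abbrev RatFuncQT : Type := FractionRing (MvPolynomial (Fin 2) ℚ)

/-- The variable `q ∈ ℚ(q, t)`. -/
def qq : RatFuncQT := algebraMap (MvPolynomial (Fin 2) ℚ) RatFuncQT (MvPolynomial.X 0)

/-- The variable `t ∈ ℚ(q, t)`. -/
def tt : RatFuncQT := algebraMap (MvPolynomial (Fin 2) ℚ) RatFuncQT (MvPolynomial.X 1)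

/-- The refined Poincaré series
`Ω_r = ∏_{k=2}^r (1 + q^k t^{k−1})^{2g} / ((1 − q^k t^{k−2})(1 − q^k t^k))`. -/
def OmegaStack (g r : ℕ) : RatFuncQT :=
  ∏ k ∈ Finset.Icc 2 r,
    (1 + qq ^ k * tt ^ (k - 1)) ^ (2 * g) /
      ((1 - qq ^ k * tt ^ (k - 2)) * (1 - qq ^ k * tt ^ k))

/-!
Writing `a = q^k t^{k-1}`, `b = q^k t^{k-2}`, `c = q^k t^k`, the `k`-th factor of `Ω_r` is
`(1 + a)^{2g} / ((1 - b)(1 - c))`, and `ι` inverts the monomials `a`, `b`, `c`. Since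
`1 ± w⁻¹ = ± w⁻¹ (1 ± w)` and `bc = a²`, the factor is multiplied by `(a²)^{1-g}` under `ι`.
The monomials `a_k² = q^{2k} t^{2(k-1)}` multiply over `2 ≤ k ≤ r` to
`q^{(r+2)(r-1)} t^{r(r-1)}`.
-/

lemma prod_Icc_two_pow_mul_pow {M : Type*} [CommMonoid M] (q t : M) (r : ℕ) :
    ∏ k ∈ Finset.Icc 2 r, q ^ (2 * k) * t ^ (2 * (k - 1)) =
      q ^ ((r + 2) * (r - 1)) * t ^ (r * (r - 1)) := by
  induction r with
  | zero => simp
  | succ n ih =>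
    cases n with
    | zero => simp
    | succ m =>
      rw [Finset.prod_Icc_succ_top (by omega), ih, mul_mul_mul_comm, ← pow_add, ← pow_add]
      congr 2 <;> simp only [Nat.add_sub_cancel] <;> ring

section

variable {K : Type*} [Field K]

lemma one_add_inv_eq {w : K} (hw : w ≠ 0) : 1 + w⁻¹ = w⁻¹ * (1 + w) := by
  rw [mul_add, mul_one, inv_mul_cancel₀ hw, add_comm]

lemma one_sub_inv_eq {w : K} (hw : w ≠ 0) : 1 - w⁻¹ = -(w⁻¹ * (1 - w)) := by
  rw [mul_sub, mul_one, inv_mul_cancel₀ hw, neg_sub]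

lemma pow_mul_inv_factor_eq {a b c : K} (ha : a ≠ 0) (habc : b * c = a ^ 2) {g : ℕ}
    (hg : 1 ≤ g) :
    (a ^ 2) ^ (g - 1) * ((1 + a⁻¹) ^ (2 * g) / ((1 - b⁻¹) * (1 - c⁻¹))) =
      (1 + a) ^ (2 * g) / ((1 - b) * (1 - c)) := by
  have hbc : b * c ≠ 0 := habc ▸ pow_ne_zero 2 ha
  have hnum : (1 + a⁻¹) ^ (2 * g) = (a ^ 2)⁻¹ ^ g * (1 + a) ^ (2 * g) := by
    rw [one_add_inv_eq ha, mul_pow, pow_mul, inv_pow]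
  have hden : (1 - b⁻¹) * (1 - c⁻¹) = (a ^ 2)⁻¹ * ((1 - b) * (1 - c)) := by
    rw [one_sub_inv_eq (left_ne_zero_of_mul hbc), one_sub_inv_eq (right_ne_zero_of_mul hbc),
      neg_mul_neg, mul_mul_mul_comm, ← mul_inv, habc]
  rw [hnum, hden, mul_div_mul_comm]
  obtain ⟨n, rfl⟩ : ∃ n, g = n + 1 := ⟨g - 1, by omega⟩
  rw [pow_succ ((a ^ 2)⁻¹), mul_div_cancel_right₀ _ (inv_ne_zero (pow_ne_zero 2 ha)),
    Nat.add_sub_cancel, inv_pow, mul_inv_cancel_left₀ (pow_ne_zero _ (pow_ne_zero 2 ha))]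

variable (q t : K) (g : ℕ)

def poincareFactor (k : ℕ) : K :=
  (1 + q ^ k * t ^ (k - 1)) ^ (2 * g) / ((1 - q ^ k * t ^ (k - 2)) * (1 - q ^ k * t ^ k))

def poincareSeries (r : ℕ) : K :=
  ∏ k ∈ Finset.Icc 2 r, poincareFactor q t g k

variable {F : Type*} [FunLike F K K] [RingHomClass F K K] (ι : F) {q t g}

lemma pow_mul_map_poincareFactor (hq : ι q = q⁻¹) (ht : ι t = t⁻¹) (hq0 : q ≠ 0) (ht0 : t ≠ 0)
    (hg : 1 ≤ g) {k : ℕ} (hk : 2 ≤ k) :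
    (q ^ (2 * k) * t ^ (2 * (k - 1))) ^ (g - 1) * ι (poincareFactor q t g k) =
      poincareFactor q t g k := by
  have map_monomial (m n : ℕ) : ι (q ^ m * t ^ n) = (q ^ m * t ^ n)⁻¹ := by
    rw [map_mul, map_pow, map_pow, hq, ht, inv_pow, inv_pow, mul_inv]
  obtain ⟨j, rfl⟩ : ∃ j, k = j + 2 := ⟨k - 2, by omega⟩
  have hsq : q ^ (2 * (j + 2)) * t ^ (2 * (j + 2 - 1)) = (q ^ (j + 2) * t ^ (j + 2 - 1)) ^ 2 := by
    simp only [Nat.add_succ_sub_one]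
    ring
  rw [hsq, poincareFactor, map_div₀, map_pow, map_mul, map_add, map_sub, map_sub, map_one,
    map_monomial, map_monomial, map_monomial]
  refine pow_mul_inv_factor_eq (mul_ne_zero (pow_ne_zero _ hq0) (pow_ne_zero _ ht0)) ?_ hg
  simp only [Nat.add_sub_cancel, Nat.add_succ_sub_one]
  ring

theorem pow_mul_map_poincareSeries (hq : ι q = q⁻¹) (ht : ι t = t⁻¹) (hq0 : q ≠ 0) (ht0 : t ≠ 0)
    (hg : 1 ≤ g) (r : ℕ) :
    q ^ ((r + 2) * (r - 1) * (g - 1)) * t ^ (r * (r - 1) * (g - 1)) * ι (poincareSeries q t g r) =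
      poincareSeries q t g r := by
  rw [pow_mul q, pow_mul t, ← mul_pow, ← prod_Icc_two_pow_mul_pow, ← Finset.prod_pow,
    poincareSeries, map_prod, ← Finset.prod_mul_distrib]
  exact Finset.prod_congr rfl fun k hk ↦
    pow_mul_map_poincareFactor ι hq ht hq0 ht0 hg (Finset.mem_Icc.mp hk).1

end

lemma qq_ne_zero : qq ≠ 0 := by
  simp [qq]

lemma tt_ne_zero : tt ≠ 0 := by
  simp [tt]

theorem stmt5_general (g r : ℕ) (hg : 2 ≤ g)
    (ι : RatFuncQT ≃ₐ[ℚ] RatFuncQT) (hq : ι qq = qq⁻¹) (ht : ι tt = tt⁻¹) :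
    qq ^ ((r + 2) * (r - 1) * (g - 1)) * tt ^ (r * (r - 1) * (g - 1)) * ι (OmegaStack g r) =
      OmegaStack g r :=
  pow_mul_map_poincareSeries ι hq ht qq_ne_zero tt_ne_zero (by omega) r

/-- for `g ≥ 2`, `r ≥ 1` and the `ℚ`-algebra automorphism `ι` of `ℚ(q,t)` with
`ι(q) = q⁻¹`, `ι(t) = t⁻¹`, one has
`q^{(r+2)(r−1)(g−1)} t^{r(r−1)(g−1)} ι(Ω_r) = Ω_r`. -/
theorem stmt5 (g r : ℕ) (hg : 2 ≤ g) (hr : 1 ≤ r)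
    (ι : RatFuncQT ≃ₐ[ℚ] RatFuncQT) (hq : ι qq = qq⁻¹) (ht : ι tt = tt⁻¹) :
    qq ^ ((r + 2) * (r - 1) * (g - 1)) * tt ^ (r * (r - 1) * (g - 1)) * ι (OmegaStack g r) =
      OmegaStack g r :=
  stmt5_general g r hg ι hq ht

end
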